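/- arXiv:2403.12048 — 5 statements merged into one kernel-verified Lean document; each statement's English description precedes it below -/
import Mathlib

section
/- Let R = 𝔼(Y)𝔼(Y)ᵀ be the reference matrix of the two-cluster model and M_opt = {Z ∈ ℝ^{n×n} : Z symmetric, Z ⪰ 0, diag(Z) = I_n}. Then Z* = u₂u₂ᵀ maximizes the objective ⟨R, Z⟩ over M_opt; that is, u₂u₂ᵀ ∈ M_opt and for every Z ∈ M_opt one has ⟨R, Z⟩ ≤ ⟨R, u₂u₂ᵀ⟩. -/
open MeasureTheory ProbabilityTheory Matrix Finset
open scoped BigOperators ENNReal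

noncomputable section

/-- Trace inner product of square matrices: `⟨A, B⟩ = tr(AᵀB)`. -/
def mip {n : ℕ} (A B : Matrix (Fin n) (Fin n) ℝ) : ℝ := (Aᵀ * B).trace

/-- Entrywise ℓ¹ norm of a matrix. -/
def l1 {n : ℕ} (M : Matrix (Fin n) (Fin n) ℝ) : ℝ := ∑ i, ∑ j, |M i j|

/-- Frobenius norm of a matrix. -/
def frob {n p : ℕ} (M : Matrix (Fin n) (Fin p) ℝ) : ℝ := Real.sqrt (∑ i, ∑ j, (M i j) ^ 2)

/-- ℓ² → ℓ² operator norm of a (rectangular) real matrix. -/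
def opN {n p : ℕ} (M : Matrix (Fin n) (Fin p) ℝ) : ℝ :=
  ‖LinearMap.toContinuousLinearMap (Matrix.toEuclideanLin M)‖

/-- The ψ₂ (sub-gaussian) norm of a real random variable:
`inf {t > 0 : 𝔼 exp(f² / t²) ≤ 2}`. -/
def psi2 {Ω : Type} [MeasurableSpace Ω] (P : MeasureTheory.Measure Ω) (f : Ω → ℝ) : ℝ :=
  sInf {t : ℝ | 0 < t ∧ ∫ ω, Real.exp (f ω ^ 2 / t ^ 2) ∂P ≤ 2}

/-- The feasible set `M_opt = {Z : Z ⪰ 0, diag(Z) = Iₙ}`. -/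
def Mopt (n : ℕ) : Set (Matrix (Fin n) (Fin n) ℝ) :=
  {Z | Z.PosSemidef ∧ ∀ i, Z i i = 1}

/-- The all-ones matrix `Eₙ = 𝟙ₙ𝟙ₙᵀ`. -/
def En (n : ℕ) : Matrix (Fin n) (Fin n) ℝ := Matrix.of fun _ _ => 1

/-- The globally centered data matrix `Y = (Iₙ − (1/n)𝟙ₙ𝟙ₙᵀ) X`. -/
def centerM {n p : ℕ} (X : Matrix (Fin n) (Fin p) ℝ) : Matrix (Fin n) (Fin p) ℝ :=
  Matrix.of fun i k => X i k - (1 / (n : ℝ)) * ∑ l, X l k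

/-- `λ = (2/(n(n−1))) Σ_{i<j} ⟨Y_i, Y_j⟩`. -/
def lamOf {n p : ℕ} (Y : Matrix (Fin n) (Fin p) ℝ) : ℝ :=
  (2 / ((n : ℝ) * ((n : ℝ) - 1))) * ∑ i, ∑ j, if i < j then Y i ⬝ᵥ Y j else 0

/-- `τ = (1/n) Σ_i ⟨Y_i, Y_i⟩`. -/
def tauOf {n p : ℕ} (Y : Matrix (Fin n) (Fin p) ℝ) : ℝ := (1 / (n : ℝ)) * ∑ i, Y i ⬝ᵥ Y i

/-- SDP1 objective: `⟨YYᵀ − λ Eₙ, Z⟩`. -/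
def sdp1Obj {n p : ℕ} (Y : Matrix (Fin n) (Fin p) ℝ) (Z : Matrix (Fin n) (Fin n) ℝ) : ℝ :=
  mip (Y * Yᵀ - lamOf Y • En n) Z

/-- `Z` is an optimal solution of SDP1 for centered data `Y`. -/
def isSDP1opt {n p : ℕ} (Y : Matrix (Fin n) (Fin p) ℝ) (Z : Matrix (Fin n) (Fin n) ℝ) : Prop :=
  Z ∈ Mopt n ∧ ∀ Z' ∈ Mopt n, sdp1Obj Y Z' ≤ sdp1Obj Y Z

/-- The group membership vector `u₂` (`1` on `C₁`, `−1` on its complement). -/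
def u2v {n : ℕ} (C1 : Finset (Fin n)) : Fin n → ℝ := fun j => if j ∈ C1 then 1 else -1

/-- `Z* = u₂u₂ᵀ`. -/
def Zstar {n : ℕ} (C1 : Finset (Fin n)) : Matrix (Fin n) (Fin n) ℝ :=
  Matrix.of fun i j => u2v C1 i * u2v C1 j

lemma mip_eq {n : ℕ} (A B : Matrix (Fin n) (Fin n) ℝ) :
    mip A B = ∑ i, ∑ j, A j i * B j i := by
  simp [mip, Matrix.trace, Matrix.mul_apply, Matrix.diag, Matrix.transpose_apply]

lemma psd_entry_abs_le {n : ℕ} {Z : Matrix (Fin n) (Fin n) ℝ} (hZ : Z.PosSemidef)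
    (hd : ∀ i, Z i i = 1) (i j : Fin n) : |Z i j| ≤ 1 := by
  rcases eq_or_ne i j with rfl | hij
  · simp [hd i]
  · set c : ℝ := if 0 ≤ Z i j then -1 else 1 with hc
    set x : Fin n → ℝ := fun k => (if k = i then (1:ℝ) else 0) + (if k = j then c else 0) with hx
    have h0 := hZ.dotProduct_mulVec_nonneg x
    have hsym : Z j i = Z i j := by
      have := hZ.1
      have := congrFun (congrFun this i) j
      simpa [Matrix.conjTranspose_apply] using this
    have hquad : (star x) ⬝ᵥ (Z *ᵥ x) = 2 + 2 * c * Z i j := by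
      simp only [star_trivial, dotProduct, mulVec, hx]
      simp only [mul_add, add_mul, mul_ite, ite_mul, mul_one, one_mul, mul_zero, zero_mul,
        Finset.sum_add_distrib, Finset.sum_ite_eq', Finset.mem_univ, if_true]
      rw [hd i, hd j, hsym]
      by_cases h : 0 ≤ Z i j
      · simp only [hc, if_pos h]; ring
      · simp only [hc, if_neg h]; ring
    rw [hquad] at h0
    by_cases hpos : 0 ≤ Z i j
    · rw [hc, if_pos hpos] at h0
      rw [abs_of_nonneg hpos]; linarith
    · push_neg at hpos
      rw [hc, if_neg (not_le.mpr hpos)] at h0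
      rw [abs_of_neg hpos]; linarith


/-- `Z* = u₂u₂ᵀ` maximizes `⟨R, Z⟩` over `M_opt`, where
`R = 𝔼(Y)𝔼(Y)ᵀ = pγ · v vᵀ` with `v_i = w₂` on `C₁` and `v_i = −w₁` on `C₂`. -/
theorem stmt_0 (n p : ℕ) (hn : 0 < n)
    (C1 : Finset (Fin n)) (hC1 : 0 < C1.card) (hC2 : 0 < (C1ᶜ : Finset (Fin n)).card)
    (μ1 μ2 : Fin p → ℝ)
    (w1 w2 pγ : ℝ)
    (hw1 : w1 = (C1.card : ℝ) / n)
    (hw2 : w2 = ((C1ᶜ : Finset (Fin n)).card : ℝ) / n)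
    (hpγ : pγ = ∑ k, (μ1 k - μ2 k) ^ 2)
    (v : Fin n → ℝ) (hv : ∀ i, v i = if i ∈ C1 then w2 else -w1)
    (R : Matrix (Fin n) (Fin n) ℝ)
    (hR : R = Matrix.of fun i j => pγ * (v i * v j)) :
    Zstar C1 ∈ Mopt n ∧ ∀ Z ∈ Mopt n, mip R Z ≤ mip R (Zstar C1) := by
  have hu2 : ∀ i, u2v C1 i * u2v C1 i = 1 := by
    intro i; by_cases h : i ∈ C1 <;> simp [u2v, h]
  have hmem : Zstar C1 ∈ Mopt n := by
    constructor
    · refine Matrix.PosSemidef.of_dotProduct_mulVec_nonneg ?_ ?_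
      · ext i j
        simp [Zstar, Matrix.conjTranspose_apply, mul_comm]
      · intro x
        have : (star x) ⬝ᵥ (Zstar C1 *ᵥ x) = (∑ k, u2v C1 k * x k) ^ 2 := by
          simp only [star_trivial, dotProduct, mulVec, Zstar, Matrix.of_apply]
          rw [sq, Finset.sum_mul_sum]
          simp only [Finset.mul_sum]
          refine Finset.sum_congr rfl fun k _ => Finset.sum_congr rfl fun l _ => ?_
          ring
        rw [this]; positivity
    · intro i; simp [Zstar, hu2 i]
  refine ⟨hmem, fun Z hZ => ?_⟩
  have hpγ0 : 0 ≤ pγ := by rw [hpγ]; positivity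
  have hw10 : 0 ≤ w1 := by rw [hw1]; positivity
  have hw20 : 0 ≤ w2 := by rw [hw2]; positivity
  have hvu : ∀ i, v i * u2v C1 i = |v i| := by
    intro i; by_cases h : i ∈ C1 <;>
      simp [hv i, u2v, h, abs_of_nonneg, hw20, abs_of_nonpos, neg_nonpos.mpr hw10]
  rw [mip_eq, mip_eq, hR]
  refine Finset.sum_le_sum fun j _ => Finset.sum_le_sum fun i _ => ?_
  simp only [Matrix.of_apply, Zstar]
  have h1 : v j * v i * (u2v C1 j * u2v C1 i) = |v j| * |v i| := by
    rw [show v j * v i * (u2v C1 j * u2v C1 i) = (v j * u2v C1 j) * (v i * u2v C1 i) by ring,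
      hvu, hvu]
  have h2 : v j * v i * Z j i ≤ |v j| * |v i| := by
    calc v j * v i * Z j i ≤ |v j * v i * Z j i| := le_abs_self _
    _ = |v j| * |v i| * |Z j i| := by rw [abs_mul, abs_mul]
    _ ≤ |v j| * |v i| * 1 := by
        apply mul_le_mul_of_nonneg_left (psd_entry_abs_le hZ.1 hZ.2 j i) (by positivity)
    _ = |v j| * |v i| := mul_one _
  calc pγ * (v i * v j) * Z i j = pγ * (v j * v i * Z j i) := by
        have hs : Z i j = Z j i := by
          have := congrFun (congrFun hZ.1.1 j) i
          simpa [Matrix.conjTranspose_apply] using this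
        rw [hs]; ring
  _ ≤ pγ * (|v j| * |v i|) := mul_le_mul_of_nonneg_left h2 hpγ0
  _ = pγ * (v i * v j) * (u2v C1 i * u2v C1 j) := by rw [← h1]; ring
end
end

section
/- Deterministic comparison lemma: for the centered matrix Y = (Iₙ − (1/n)𝟙ₙ𝟙ₙᵀ)X with rows Y_i and noise vectors Z_i = X_i − 𝔼X_i, for every x ∈ {−1,1}ⁿ: Σ_{i=1}^n x_i ⟨Y_i − 𝔼Y_i, μ^{(1)} − μ^{(2)}⟩ ≤ (2(n−1)/n) Σ_{i=1}^n |⟨Z_i, μ^{(1)} − μ^{(2)}⟩|. -/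
open MeasureTheory ProbabilityTheory Matrix Finset
open scoped BigOperators ENNReal

noncomputable section

/-! Centering is self-adjoint, so the ± signs can be moved onto the centered sign vector
`x - x̄ 𝟙`, whose entries are at most `2(n-1)/n` in absolute value: `x_i - x̄` is the average of the
`n - 1` nonzero differences `x_i - x_j`, each of size at most `2`. -/

theorem sub_smul_sum_dotProduct {ι m : Type*} [Fintype ι] [Fintype m]
    (c : ℝ) (Z : ι → m → ℝ) (i : ι) (d : m → ℝ) :
    (Z i - c • ∑ l, Z l) ⬝ᵥ d = Z i ⬝ᵥ d - c * ∑ l, Z l ⬝ᵥ d := by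
  rw [sub_dotProduct, smul_dotProduct, sum_dotProduct, smul_eq_mul]

theorem sum_mul_sub_mul_sum_comm {ι : Type*} [Fintype ι] (c : ℝ) (x a : ι → ℝ) :
    ∑ i, x i * (a i - c * ∑ j, a j) = ∑ i, a i * (x i - c * ∑ j, x j) := by
  simp only [mul_sub, sum_sub_distrib, ← sum_mul, mul_comm (x _) (a _)]
  ring

theorem abs_sub_mean_le {ι : Type*} [Fintype ι] [DecidableEq ι] {x : ι → ℝ}
    (hx : ∀ j, |x j| ≤ 1) (i : ι) :
    |x i - (1 / Fintype.card ι) * ∑ j, x j| ≤ 2 * ((Fintype.card ι : ℝ) - 1) / Fintype.card ι := by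
  have hpos : 0 < Fintype.card ι := Fintype.card_pos_iff.mpr ⟨i⟩
  have hdiff : x i - (1 / Fintype.card ι) * ∑ j, x j
      = (1 / Fintype.card ι) * ∑ j ∈ univ.erase i, (x i - x j) := by
    rw [sum_erase _ (sub_self _), sum_sub_distrib, sum_const, card_univ, nsmul_eq_mul]
    field_simp
  have hsum : ∑ j ∈ univ.erase i, |x i - x j| ≤ ((Fintype.card ι : ℝ) - 1) * 2 := by
    have := sum_le_card_nsmul (univ.erase i) (fun j => |x i - x j|) 2 fun j _ =>
      (abs_sub _ _).trans (by linarith [hx i, hx j])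
    rwa [card_erase_of_mem (mem_univ i), card_univ, nsmul_eq_mul,
      Nat.cast_sub hpos, Nat.cast_one] at this
  rw [hdiff, abs_mul, abs_of_pos (by positivity)]
  calc 1 / (Fintype.card ι : ℝ) * |∑ j ∈ univ.erase i, (x i - x j)|
      ≤ 1 / Fintype.card ι * (((Fintype.card ι : ℝ) - 1) * 2) := by
        gcongr
        exact (abs_sum_le_sum_abs _ _).trans hsum
    _ = 2 * ((Fintype.card ι : ℝ) - 1) / Fintype.card ι := by ring

theorem sum_mul_le_mul_sum_abs {ι : Type*} (s : Finset ι) {a w : ι → ℝ} {c : ℝ}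
    (hw : ∀ i ∈ s, |w i| ≤ c) : ∑ i ∈ s, a i * w i ≤ c * ∑ i ∈ s, |a i| := by
  rw [mul_sum]
  refine sum_le_sum fun i hi => ?_
  calc a i * w i ≤ |a i| * |w i| := (le_abs_self _).trans (abs_mul _ _).le
    _ ≤ |a i| * c := mul_le_mul_of_nonneg_left (hw i hi) (abs_nonneg _)
    _ = c * |a i| := mul_comm _ _

theorem stmt_9_general (n p : ℕ)
    (Z : Fin n → Fin p → ℝ)
    (Yd : Fin n → Fin p → ℝ)
    -- Y_i − 𝔼Y_i = Z_i − (1/n) Σ_k Z_k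
    (hYd : ∀ j k, Yd j k = Z j k - (1 / (n : ℝ)) * ∑ l, Z l k)
    (d : Fin p → ℝ) :
    ∀ x : Fin n → ℝ, (∀ i, x i = 1 ∨ x i = -1) →
      ∑ i, x i * (Yd i ⬝ᵥ d) ≤
        (2 * ((n : ℝ) - 1) / n) * ∑ i, |Z i ⬝ᵥ d| := by
  intro x hx
  have hYd_dot : ∀ i, Yd i ⬝ᵥ d = Z i ⬝ᵥ d - (1 / (n : ℝ)) * ∑ l, Z l ⬝ᵥ d := fun i => by
    rw [← sub_smul_sum_dotProduct]
    congr 1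
    ext k
    simp [hYd]
  have hx_abs : ∀ j, |x j| ≤ 1 := fun j => by rcases hx j with h | h <;> simp [h]
  simp only [hYd_dot]
  rw [sum_mul_sub_mul_sum_comm]
  refine sum_mul_le_mul_sum_abs _ fun i _ => ?_
  simpa using abs_sub_mean_le hx_abs i

/-- deterministic comparison lemma for the centered rows. -/
theorem stmt_9 (n p : ℕ) (hn : 0 < n)
    (C1 : Finset (Fin n))
    (μ1 μ2 : Fin p → ℝ)
    (X : Fin n → Fin p → ℝ)
    (Z : Fin n → Fin p → ℝ)
    (hZ : ∀ j k, Z j k = X j k - if j ∈ C1 then μ1 k else μ2 k)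
    (Yd : Fin n → Fin p → ℝ)
    -- Y_i − 𝔼Y_i = Z_i − (1/n) Σ_k Z_k
    (hYd : ∀ j k, Yd j k = Z j k - (1 / (n : ℝ)) * ∑ l, Z l k)
    (d : Fin p → ℝ) (hd : ∀ k, d k = μ1 k - μ2 k) :
    ∀ x : Fin n → ℝ, (∀ i, x i = 1 ∨ x i = -1) →
      ∑ i, x i * (Yd i ⬝ᵥ d) ≤
        (2 * ((n : ℝ) - 1) / n) * ∑ i, |Z i ⬝ᵥ d| :=
  stmt_9_general n p Z Yd hYd d
end
end

section
/- Bias bound for the oracle matrix: in the two-group sub-gaussian mixture model, suppose (A2) holds with parameter ξ, ξ ≥ (1/(2n))·max(4, 1/w_min), and n ≥ 4. Then ‖𝔼B − R‖₂ ≤ (2/3)ξnpγ. Furthermore, when V₁ = V₂, ‖𝔼B − R‖₂ ≤ pγ/3. -/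
open MeasureTheory ProbabilityTheory Matrix Finset
open scoped BigOperators ENNReal

noncomputable section

-- ===================== auxiliary lemmas =====================

lemma euclid_norm {k : ℕ} (x : EuclideanSpace ℝ (Fin k)) :
    ‖x‖ = Real.sqrt (∑ i, (x i) ^ 2) := by
  rw [EuclideanSpace.norm_eq]
  congr 1
  exact Finset.sum_congr rfl fun i _ => by rw [Real.norm_eq_abs, sq_abs]

lemma opN_mul_le {n p q : ℕ} (A : Matrix (Fin n) (Fin p) ℝ) (B : Matrix (Fin p) (Fin q) ℝ) :
    opN (A * B) ≤ opN A * opN B := by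
  apply ContinuousLinearMap.opNorm_le_bound _ (mul_nonneg (norm_nonneg _) (norm_nonneg _))
  intro x
  have hcomp : (LinearMap.toContinuousLinearMap (Matrix.toEuclideanLin (A * B))) x
      = (LinearMap.toContinuousLinearMap (Matrix.toEuclideanLin A))
        ((LinearMap.toContinuousLinearMap (Matrix.toEuclideanLin B)) x) := by
    simp only [LinearMap.coe_toContinuousLinearMap', Matrix.toEuclideanLin_apply]
    simp [Matrix.mulVec_mulVec]
  rw [hcomp]
  calc ‖_‖ ≤ opN A * ‖(LinearMap.toContinuousLinearMap (Matrix.toEuclideanLin B)) x‖ :=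
        ContinuousLinearMap.le_opNorm _ _
    _ ≤ opN A * (opN B * ‖x‖) :=
        mul_le_mul_of_nonneg_left (ContinuousLinearMap.le_opNorm _ _) (norm_nonneg _)
    _ = opN A * opN B * ‖x‖ := by ring

lemma opN_le_of_mulVec {n p : ℕ} (M : Matrix (Fin n) (Fin p) ℝ) {C : ℝ} (hC : 0 ≤ C)
    (h : ∀ x : Fin p → ℝ, ∑ i, ((M *ᵥ x) i) ^ 2 ≤ C ^ 2 * ∑ j, (x j) ^ 2) :
    opN M ≤ C := by
  apply ContinuousLinearMap.opNorm_le_bound _ hC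
  intro x
  have h1 : ‖(LinearMap.toContinuousLinearMap (Matrix.toEuclideanLin M)) x‖
      = Real.sqrt (∑ i, ((M *ᵥ (fun j => x j)) i) ^ 2) := by
    rw [euclid_norm]; rfl
  rw [h1, euclid_norm]
  calc Real.sqrt (∑ i, ((M *ᵥ (fun j => x j)) i) ^ 2)
      ≤ Real.sqrt (C ^ 2 * ∑ j, (x j) ^ 2) := Real.sqrt_le_sqrt (h _)
    _ = C * Real.sqrt (∑ j, (x j) ^ 2) := by
        rw [Real.sqrt_mul (sq_nonneg C), Real.sqrt_sq hC]

lemma opN_diagonal_le {n : ℕ} (d : Fin n → ℝ) {C : ℝ} (hC : 0 ≤ C)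
    (h : ∀ i, |d i| ≤ C) : opN (Matrix.diagonal d) ≤ C := by
  apply opN_le_of_mulVec _ hC
  intro x
  rw [Finset.mul_sum]
  apply Finset.sum_le_sum
  intro i _
  rw [Matrix.mulVec_diagonal]
  have := h i
  have h2 : (d i) ^ 2 ≤ C ^ 2 := by
    nlinarith [abs_nonneg (d i), sq_abs (d i), neg_abs_le (d i), le_abs_self (d i)]
  nlinarith [sq_nonneg (x i), mul_pow (d i) (x i) 2]

lemma opN_center_le {n : ℕ} (hn : 1 ≤ n) :
    opN (Matrix.of fun i j : Fin n => (if i = j then (1:ℝ) else 0) - 1/(n:ℝ)) ≤ 1 := by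
  apply opN_le_of_mulVec _ zero_le_one
  intro x
  have hN : (0:ℝ) < n := by exact_mod_cast hn
  have hmv : ∀ i, ((Matrix.of fun i j : Fin n => (if i = j then (1:ℝ) else 0) - 1/(n:ℝ)) *ᵥ x) i
      = x i - (1/(n:ℝ)) * ∑ j, x j := by
    intro i
    simp only [Matrix.mulVec, Matrix.of_apply, dotProduct, sub_mul, Finset.sum_sub_distrib,
      ite_mul, one_mul, zero_mul, Finset.sum_ite_eq, Finset.mem_univ, if_true]
    rw [Finset.mul_sum]
  simp only [hmv, one_pow, one_mul]
  have expand : ∑ i, (x i - (1/(n:ℝ)) * ∑ j, x j) ^ 2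
      = (∑ i, (x i)^2) - (1/(n:ℝ)) * (∑ j, x j)^2 := by
    have e : ∀ i : Fin n, (x i - (1/(n:ℝ)) * ∑ j, x j) ^ 2
        = (x i)^2 - (2/(n:ℝ) * ∑ j, x j) * x i + ((1/(n:ℝ)) * ∑ j, x j)^2 := fun i => by ring
    rw [Finset.sum_congr rfl fun i _ => e i]
    rw [Finset.sum_add_distrib, Finset.sum_sub_distrib, ← Finset.mul_sum, Finset.sum_const,
      Finset.card_univ, Fintype.card_fin, nsmul_eq_mul]
    field_simp
    ring
  rw [expand]
  have : 0 ≤ (1/(n:ℝ)) * (∑ j, x j)^2 := by positivity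
  linarith

lemma centerM_eq_mul {n p : ℕ} (A : Matrix (Fin n) (Fin p) ℝ) :
    centerM A = (Matrix.of fun i j : Fin n => (if i = j then (1:ℝ) else 0) - 1/(n:ℝ)) * A := by
  ext i k
  simp only [centerM, Matrix.of_apply, Matrix.mul_apply, sub_mul, Finset.sum_sub_distrib,
    ite_mul, one_mul, zero_mul, Finset.sum_ite_eq, Finset.mem_univ, if_true]
  rw [Finset.mul_sum]

lemma centerM_col_sum {n p : ℕ} (A : Matrix (Fin n) (Fin p) ℝ) (hn : 1 ≤ n) (k : Fin p) :
    ∑ i, centerM A i k = 0 := by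
  simp only [centerM, Matrix.of_apply, Finset.sum_sub_distrib, Finset.sum_const,
    Finset.card_univ, Fintype.card_fin, nsmul_eq_mul]
  have hN : ((n:ℝ)) ≠ 0 := by positivity
  field_simp
  ring

lemma sum_lt_eq {n : ℕ} (f : Fin n → Fin n → ℝ) (hsymm : ∀ i j, f i j = f j i) :
    (2:ℝ) * ∑ i, ∑ j, (if i < j then f i j else 0) = (∑ i, ∑ j, f i j) - ∑ i, f i i := by
  have split : ∀ i j : Fin n, f i j = (if i < j then f i j else 0) + (if j < i then f i j else 0)
      + (if i = j then f i j else 0) := by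
    intro i j
    rcases lt_trichotomy i j with h | h | h
    · simp [h, h.ne, not_lt.mpr h.le]
    · simp [h]
    · simp [h, h.ne', not_lt.mpr h.le]
  have h1 : (∑ i, ∑ j, f i j) = (∑ i, ∑ j, (if i < j then f i j else 0))
      + (∑ i, ∑ j, (if j < i then f i j else 0)) + ∑ i, ∑ j, (if i = j then f i j else 0) := by
    rw [← Finset.sum_add_distrib, ← Finset.sum_add_distrib]
    apply Finset.sum_congr rfl; intro i _
    rw [← Finset.sum_add_distrib, ← Finset.sum_add_distrib]
    exact Finset.sum_congr rfl fun j _ => split i j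
  have h2 : (∑ i, ∑ j, (if j < i then f i j else 0)) = ∑ i, ∑ j, (if i < j then f i j else 0) := by
    rw [Finset.sum_comm]
    apply Finset.sum_congr rfl; intro i _
    apply Finset.sum_congr rfl; intro j _
    rw [hsymm]
  have h3 : (∑ i, ∑ j, (if i = j then f i j else 0)) = ∑ i, f i i := by
    apply Finset.sum_congr rfl; intro i _
    rw [Finset.sum_ite_eq Finset.univ i (fun j => f i j)]
    simp
  rw [h1, h2, h3]; ring

lemma lam_eq_tau {n p : ℕ} (hn : 2 ≤ n) (A : Matrix (Fin n) (Fin p) ℝ) :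
    lamOf (centerM A) = -(1/((n:ℝ)-1)) * tauOf (centerM A) := by
  set Y := centerM A with hY
  have hsymm : ∀ i j : Fin n, Y i ⬝ᵥ Y j = Y j ⬝ᵥ Y i := fun i j => dotProduct_comm _ _
  have key := sum_lt_eq (fun i j => Y i ⬝ᵥ Y j) hsymm
  have hzero : (∑ i, ∑ j, Y i ⬝ᵥ Y j) = 0 := by
    have step : (∑ i, ∑ j, Y i ⬝ᵥ Y j) = ∑ k, (∑ i, Y i k) * (∑ j, Y j k) := by
      simp only [dotProduct]
      have e1 : ∀ i : Fin n, (∑ j, ∑ k, Y i k * Y j k) = ∑ k, ∑ j, Y i k * Y j k :=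
        fun i => Finset.sum_comm
      rw [Finset.sum_congr rfl fun i _ => e1 i, Finset.sum_comm]
      apply Finset.sum_congr rfl; intro k _
      rw [Finset.sum_mul_sum]
    rw [step]
    apply Finset.sum_eq_zero; intro k _
    rw [centerM_col_sum A (by omega) k, zero_mul]
  have htau : tauOf Y = (1/(n:ℝ)) * ∑ i, Y i ⬝ᵥ Y i := rfl
  have hN1 : ((n:ℝ)) ≠ 0 := by positivity
  have hN2 : ((n:ℝ)) - 1 ≠ 0 := by
    have : (2:ℝ) ≤ (n:ℝ) := by exact_mod_cast hn
    linarith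
  have hdiag : (∑ i, ∑ j, if i < j then Y i ⬝ᵥ Y j else 0) = -(1/2) * ∑ i, Y i ⬝ᵥ Y i := by
    have := key
    simp only [hzero] at this
    linarith
  rw [lamOf, hdiag, htau]
  field_simp

lemma sum_mem_ite {n : ℕ} (C1 : Finset (Fin n)) (x y : ℝ) :
    (∑ a : Fin n, if a ∈ C1 then x else y) = C1.card * x + (C1ᶜ).card * y := by
  rw [Finset.sum_ite]
  simp [Finset.filter_mem_eq_inter, Finset.filter_not, Finset.compl_eq_univ_sdiff]

lemma moments {Ω : Type} [MeasurableSpace Ω] (P : Measure Ω) [IsProbabilityMeasure P] {n m : ℕ}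
    (W : Ω → Matrix (Fin n) (Fin m) ℝ)
    (hWmeas : ∀ j k, Measurable fun ω => W ω j k)
    (hWindep : iIndepFun
      (fun (jk : Fin n × Fin m) ω => W ω jk.1 jk.2) P)
    (hWmean : ∀ j k, ∫ ω, W ω j k ∂P = 0)
    (hWiso : ∀ j k l, ∫ ω, (W ω j k * W ω j l) ∂P = if k = l then (1:ℝ) else 0) :
    (∀ a k b l, Integrable (fun ω => W ω a k * W ω b l) P) ∧
    (∀ a k, Integrable (fun ω => W ω a k) P) ∧
    (∀ a k b l, ∫ ω, W ω a k * W ω b l ∂P = if a = b ∧ k = l then (1:ℝ) else 0) := by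
  have hsq : ∀ a k, Integrable (fun ω => W ω a k * W ω a k) P := by
    intro a k
    by_contra h
    have := hWiso a k k
    rw [integral_undef h] at this
    simp at this
  have hmem2 : ∀ a k, MemLp (fun ω => W ω a k) 2 P := by
    intro a k
    rw [memLp_two_iff_integrable_sq (hWmeas a k).aestronglyMeasurable]
    have := hsq a k
    simpa [sq] using this
  have hint : ∀ a k, Integrable (fun ω => W ω a k) P :=
    fun a k => (hmem2 a k).integrable one_le_two
  have hindep : ∀ a k b l, (a, k) ≠ (b, l) →
      IndepFun (fun ω => W ω a k) (fun ω => W ω b l) P := by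
    intro a k b l hne
    exact hWindep.indepFun hne
  have hmul : ∀ a k b l, Integrable (fun ω => W ω a k * W ω b l) P := by
    intro a k b l
    by_cases h : (a, k) = (b, l)
    · have h1 : a = b := congrArg Prod.fst h
      have h2 : k = l := congrArg Prod.snd h
      subst h1; subst h2
      exact hsq a k
    · exact (hindep a k b l h).integrable_mul (hint a k) (hint b l)
  have hmom : ∀ a k b l, ∫ ω, W ω a k * W ω b l ∂P = if a = b ∧ k = l then (1:ℝ) else 0 := by
    intro a k b l
    by_cases h : (a, k) = (b, l)
    · have h1 : a = b := congrArg Prod.fst h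
      have h2 : k = l := congrArg Prod.snd h
      subst h1; subst h2
      rw [hWiso a k k]
      simp
    · rw [(hindep a k b l h).integral_fun_mul_eq_mul_integral (hWmeas a k).aestronglyMeasurable
        (hWmeas b l).aestronglyMeasurable, hWmean a k, zero_mul]
      by_cases h1 : a = b
      · subst h1
        by_cases h2 : k = l
        · subst h2; simp at *
        · simp [h2]
      · simp [h1]
  exact ⟨hmul, hint, hmom⟩

lemma xmom {Ω : Type} [MeasurableSpace Ω] (P : Measure Ω) [IsProbabilityMeasure P] {n p m : ℕ}
    (W : Ω → Matrix (Fin n) (Fin m) ℝ)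
    (hmul : ∀ a k b l, Integrable (fun ω => W ω a k * W ω b l) P)
    (hint : ∀ a k, Integrable (fun ω => W ω a k) P)
    (hmean : ∀ j k, ∫ ω, W ω j k ∂P = 0)
    (hmom : ∀ a k b l, ∫ ω, W ω a k * W ω b l ∂P = if a = b ∧ k = l then (1:ℝ) else 0)
    (M : Matrix (Fin n) (Fin p) ℝ) (Hr : Fin n → Matrix (Fin p) (Fin m) ℝ)
    (X : Ω → Matrix (Fin n) (Fin p) ℝ)
    (hX : ∀ ω j k, X ω j k = M j k + ∑ l, Hr j k l * W ω j l) :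
    (∀ a k, Integrable (fun ω => X ω a k) P) ∧
    (∀ a k, ∫ ω, X ω a k ∂P = M a k) ∧
    (∀ a k b k', Integrable (fun ω => X ω a k * X ω b k') P) ∧
    (∀ a k b k', ∫ ω, X ω a k * X ω b k' ∂P
      = M a k * M b k' + (if a = b then ∑ l, Hr a k l * Hr a k' l else 0)) := by
  set Zf : Fin n → Fin p → Ω → ℝ := fun a k ω => ∑ l, Hr a k l * W ω a l with hZf
  have hZint : ∀ a k, Integrable (Zf a k) P := by
    intro a k
    exact integrable_finset_sum _ fun l _ => (hint a l).const_mul _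
  have hZmean : ∀ a k, ∫ ω, Zf a k ω ∂P = 0 := by
    intro a k
    rw [hZf]
    rw [integral_finset_sum _ fun l _ => (hint a l).const_mul _]
    apply Finset.sum_eq_zero; intro l _
    rw [integral_const_mul, hmean, mul_zero]
  have hexp : ∀ a k b k', (fun ω => Zf a k ω * Zf b k' ω)
      = fun ω => ∑ l, ∑ l', (Hr a k l * Hr b k' l') * (W ω a l * W ω b l') := by
    intro a k b k'
    funext ω
    rw [hZf]
    simp only
    rw [Finset.sum_mul_sum]
    apply Finset.sum_congr rfl; intro l _
    apply Finset.sum_congr rfl; intro l' _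
    ring
  have hZZint : ∀ a k b k', Integrable (fun ω => Zf a k ω * Zf b k' ω) P := by
    intro a k b k'
    rw [hexp]
    exact integrable_finset_sum _ fun l _ =>
      integrable_finset_sum _ fun l' _ => (hmul a l b l').const_mul _
  have hZZ : ∀ a k b k', ∫ ω, Zf a k ω * Zf b k' ω ∂P
      = if a = b then ∑ l, Hr a k l * Hr a k' l else 0 := by
    intro a k b k'
    rw [hexp]
    rw [integral_finset_sum _ fun l _ =>
      integrable_finset_sum _ fun l' _ => (hmul a l b l').const_mul _]
    have e2 : ∀ l, ∫ ω, ∑ l', (Hr a k l * Hr b k' l') * (W ω a l * W ω b l') ∂P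
        = ∑ l', (Hr a k l * Hr b k' l') * (if a = b ∧ l = l' then (1:ℝ) else 0) := by
      intro l
      rw [integral_finset_sum _ fun l' _ => (hmul a l b l').const_mul _]
      exact Finset.sum_congr rfl fun l' _ => by rw [integral_const_mul, hmom]
    rw [Finset.sum_congr rfl fun l _ => e2 l]
    by_cases hab : a = b
    · subst hab
      simp only [true_and, mul_ite, mul_one, mul_zero]
      apply Finset.sum_congr rfl; intro l _
      rw [Finset.sum_ite_eq Finset.univ l fun l' => Hr a k l * Hr a k' l']
      simp
    · simp [hab]
  have hXfun : ∀ a k, (fun ω => X ω a k) = fun ω => M a k + Zf a k ω := by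
    intro a k; funext ω; rw [hX]
  have hXint : ∀ a k, Integrable (fun ω => X ω a k) P := by
    intro a k
    rw [hXfun]
    exact (integrable_const _).add (hZint a k)
  have hXmean : ∀ a k, ∫ ω, X ω a k ∂P = M a k := by
    intro a k
    have i0 : Integrable (fun _ : Ω => M a k) P := integrable_const _
    rw [hXfun, integral_add i0 (hZint a k), hZmean, integral_const]
    simp
  have hXXfun : ∀ a k b k', (fun ω => X ω a k * X ω b k')
      = fun ω => (M a k * M b k' + M a k * Zf b k' ω)
        + (Zf a k ω * M b k' + Zf a k ω * Zf b k' ω) := by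
    intro a k b k'; funext ω; rw [hX, hX]; simp only [hZf]; ring
  have hXXint : ∀ a k b k', Integrable (fun ω => X ω a k * X ω b k') P := by
    intro a k b k'
    rw [hXXfun]
    exact (((integrable_const _).add ((hZint b k').const_mul _)).add
      (((hZint a k).mul_const _).add (hZZint a k b k')))
  refine ⟨hXint, hXmean, hXXint, ?_⟩
  intro a k b k'
  have i3 : Integrable (fun _ : Ω => M a k * M b k') P := integrable_const _
  have i4 : Integrable (fun ω => M a k * Zf b k' ω) P := (hZint b k').const_mul _
  have i5 : Integrable (fun ω => Zf a k ω * M b k') P := (hZint a k).mul_const _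
  have i1 : Integrable (fun ω => M a k * M b k' + M a k * Zf b k' ω) P := i3.add i4
  have i2 : Integrable (fun ω => Zf a k ω * M b k' + Zf a k ω * Zf b k' ω) P :=
    i5.add (hZZint a k b k')
  rw [hXXfun, integral_add i1 i2, integral_add i3 i4, integral_add i5 (hZZint a k b k'),
    integral_const, integral_const_mul, integral_mul_const, hZmean, hZmean, hZZ]
  simp


set_option maxHeartbeats 2000000 in
/-- bias bound `‖𝔼B − R‖₂ ≤ (2/3)ξnpγ` for the oracle matrix. -/
theorem stmt_11 :
    ∀ (n p m : ℕ) (_hn : 4 ≤ n) (_hpm : p ≤ m)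
      (Ω : Type) (_mΩ : MeasurableSpace Ω) (P : Measure Ω) (_hP : IsProbabilityMeasure P)
      (C1 : Finset (Fin n)) (_hC1 : C1.Nonempty) (_hC2 : (C1ᶜ : Finset (Fin n)).Nonempty)
      (μ1 μ2 : Fin p → ℝ) (γ : ℝ)
      (_hγ : (p : ℝ) * γ = ∑ k, (μ1 k - μ2 k) ^ 2)
      (C0 : ℝ) (_hC0 : 0 < C0)
      (H1 H2 : Matrix (Fin p) (Fin m) ℝ) (_hH1 : 0 < opN H1) (_hH2 : 0 < opN H2)
      (W : Ω → Matrix (Fin n) (Fin m) ℝ)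
      (_hWmeas : ∀ j k, Measurable fun ω => W ω j k)
      (_hWindep : iIndepFun
        (fun (jk : Fin n × Fin m) ω => W ω jk.1 jk.2) P)
      (_hWmean : ∀ j k, ∫ ω, W ω j k ∂P = 0)
      (_hWiso : ∀ j k l, ∫ ω, (W ω j k * W ω j l) ∂P = if k = l then (1 : ℝ) else 0)
      (_hWpsi : ∀ j k, psi2 P (fun ω => W ω j k) ≤ C0)
      (X : Ω → Matrix (Fin n) (Fin p) ℝ)
      (_hX : ∀ ω j k, X ω j k =
        (if j ∈ C1 then μ1 k else μ2 k) + ((if j ∈ C1 then H1 else H2) *ᵥ W ω j) k)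
      (Zn : Ω → Matrix (Fin n) (Fin p) ℝ)
      (_hZn : ∀ ω j k, Zn ω j k = ((if j ∈ C1 then H1 else H2) *ᵥ W ω j) k)
      (w1 w2 wmin : ℝ)
      (_hw1 : w1 = (C1.card : ℝ) / n)
      (_hw2 : w2 = ((C1ᶜ : Finset (Fin n)).card : ℝ) / n)
      (_hwmin : wmin = min w1 w2)
      (covMax : ℝ)
      (_hcov : covMax = max (opN (H1 * H1ᵀ)) (opN (H2 * H2ᵀ)))
      (V1 V2 : ℝ)
      (_hV1 : V1 = ∑ i, ∑ k, (H1 i k) ^ 2) (_hV2 : V2 = ∑ i, ∑ k, (H2 i k) ^ 2)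
      (ξ : ℝ) (_hξpos : 0 < ξ)
      -- (A2)
      (_hA2 : |V1 - V2| ≤ ξ * n * ((p : ℝ) * γ) / 3)
      (_hξlow : ξ ≥ (1 / (2 * (n : ℝ))) * max 4 (1 / wmin))
      (EY : Matrix (Fin n) (Fin p) ℝ)
      (_hEY : ∀ i k, EY i k = ∫ ω, centerM (X ω) i k ∂P)
      (EYY : Matrix (Fin n) (Fin n) ℝ)
      (_hEYY : ∀ i j, EYY i j = ∫ ω, (centerM (X ω) * (centerM (X ω))ᵀ) i j ∂P)
      (Elam Etau : ℝ)
      (_hElam : Elam = ∫ ω, lamOf (centerM (X ω)) ∂P)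
      (_hEtau : Etau = ∫ ω, tauOf (centerM (X ω)) ∂P)
      -- 𝔼B = 𝔼(YYᵀ) − (𝔼λ)(Eₙ − Iₙ) − (𝔼τ) Iₙ
      (EB : Matrix (Fin n) (Fin n) ℝ)
      (_hEB : EB = EYY - Elam • (En n - 1) - Etau • (1 : Matrix (Fin n) (Fin n) ℝ))
      -- R = 𝔼(Y)𝔼(Y)ᵀ
      (R : Matrix (Fin n) (Fin n) ℝ) (_hR : R = EY * EYᵀ),
      opN (EB - R) ≤ (2 / 3) * ξ * n * ((p : ℝ) * γ) ∧
      (V1 = V2 → opN (EB - R) ≤ (p : ℝ) * γ / 3) := by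
  intro n p m hn hpm Ω mΩ P hP C1 hC1 hC2 μ1 μ2 γ hγ C0 hC0 H1 H2 hH1 hH2 W hWmeas hWindep
    hWmean hWiso hWpsi X hX Zn hZn w1 w2 wmin hw1 hw2 hwmin covMax hcov V1 V2 hV1 hV2 ξ hξpos
    hA2 hξlow EY hEY EYY hEYY Elam Etau hElam hEtau EB hEB R hR
  haveI := hP
  have hN4 : (4:ℝ) ≤ (n:ℝ) := by exact_mod_cast hn
  have hNpos : (0:ℝ) < (n:ℝ) := by linarith
  have hN1 : (0:ℝ) < (n:ℝ) - 1 := by linarith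
  have hNne : ((n:ℝ)) ≠ 0 := ne_of_gt hNpos
  have hN1ne : ((n:ℝ)) - 1 ≠ 0 := ne_of_gt hN1
  obtain ⟨hmul, hint, hmom⟩ := moments P W hWmeas hWindep hWmean hWiso
  set Mm : Matrix (Fin n) (Fin p) ℝ :=
    Matrix.of (fun j k => if j ∈ C1 then μ1 k else μ2 k) with hMm
  set Hr : Fin n → Matrix (Fin p) (Fin m) ℝ := fun j => if j ∈ C1 then H1 else H2 with hHrd
  have hXentry : ∀ ω j k, X ω j k = Mm j k + ∑ l, Hr j k l * W ω j l := by
    intro ω j k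
    rw [hX ω j k]
    rfl
  obtain ⟨hXint, hXmean, hXXint, hXXval⟩ := xmom P W hmul hint hWmean hmom Mm Hr X hXentry
  set Q : Matrix (Fin n) (Fin n) ℝ :=
    Matrix.of (fun i j : Fin n => (if i = j then (1:ℝ) else 0) - 1/(n:ℝ)) with hQd
  have hQc : ∀ A : Matrix (Fin n) (Fin p) ℝ, centerM A = Q * A := fun A => centerM_eq_mul A
  set v : Fin n → ℝ := fun j => if j ∈ C1 then V1 else V2 with hvd
  set D : Matrix (Fin n) (Fin n) ℝ := Matrix.diagonal v with hDd
  -- v sums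
  have hvsum : ∀ a, (∑ k, ∑ l, Hr a k l * Hr a k l) = v a := by
    intro a
    by_cases h : a ∈ C1
    · simp only [hHrd, hvd, h, if_true, hV1]
      exact Finset.sum_congr rfl fun k _ => Finset.sum_congr rfl fun l _ => (sq _).symm
    · simp only [hHrd, hvd, h, if_false, hV2]
      exact Finset.sum_congr rfl fun k _ => Finset.sum_congr rfl fun l _ => (sq _).symm
  -- EY = Q * Mm
  have hEYval : EY = Q * Mm := by
    ext i k
    rw [hEY i k]
    have e1 : ∀ ω, centerM (X ω) i k = ∑ a, Q i a * X ω a k := by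
      intro ω
      rw [hQc (X ω)]
      exact Matrix.mul_apply
    rw [integral_congr_ae (Filter.Eventually.of_forall e1)]
    rw [integral_finset_sum _ fun a _ => (hXint a k).const_mul _]
    rw [Matrix.mul_apply]
    exact Finset.sum_congr rfl fun a _ => by rw [integral_const_mul, hXmean]
  -- expansion of (Y Yᵀ) i j
  have hYYexp : ∀ (ω : Ω) (i j : Fin n), (centerM (X ω) * (centerM (X ω))ᵀ) i j
      = ∑ k, ∑ a, ∑ b, (Q i a * Q j b) * (X ω a k * X ω b k) := by
    intro ω i j
    rw [Matrix.mul_apply]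
    apply Finset.sum_congr rfl; intro k _
    rw [Matrix.transpose_apply, hQc (X ω), Matrix.mul_apply, Matrix.mul_apply,
      Finset.sum_mul_sum]
    apply Finset.sum_congr rfl; intro a _
    apply Finset.sum_congr rfl; intro b _
    ring
  have hYYint : ∀ i j, Integrable (fun ω => (centerM (X ω) * (centerM (X ω))ᵀ) i j) P := by
    intro i j
    have : (fun ω => (centerM (X ω) * (centerM (X ω))ᵀ) i j)
        = fun ω => ∑ k, ∑ a, ∑ b, (Q i a * Q j b) * (X ω a k * X ω b k) :=
      funext fun ω => hYYexp ω i j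
    rw [this]
    exact integrable_finset_sum _ fun k _ => integrable_finset_sum _ fun a _ =>
      integrable_finset_sum _ fun b _ => (hXXint a k b k).const_mul _
  -- EYY value
  have hEYYval : EYY = Q * Mm * (Q * Mm)ᵀ + Q * D * Qᵀ := by
    ext i j
    rw [hEYY i j]
    rw [integral_congr_ae (Filter.Eventually.of_forall fun ω => hYYexp ω i j)]
    rw [integral_finset_sum _ fun k _ => integrable_finset_sum _ fun a _ =>
      integrable_finset_sum _ fun b _ => (hXXint a k b k).const_mul _]
    have e2 : ∀ k : Fin p, ∫ ω, ∑ a, ∑ b, (Q i a * Q j b) * (X ω a k * X ω b k) ∂P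
        = ∑ a, ∑ b, (Q i a * Q j b)
          * (Mm a k * Mm b k + if a = b then ∑ l, Hr a k l * Hr a k l else 0) := by
      intro k
      rw [integral_finset_sum _ fun a _ =>
        integrable_finset_sum _ fun b _ => (hXXint a k b k).const_mul _]
      apply Finset.sum_congr rfl; intro a _
      rw [integral_finset_sum _ fun b _ => (hXXint a k b k).const_mul _]
      apply Finset.sum_congr rfl; intro b _
      rw [integral_const_mul, hXXval]
    rw [Finset.sum_congr rfl fun k _ => e2 k]
    -- split the sum
    have e3 : ∀ k : Fin p, (∑ a, ∑ b, (Q i a * Q j b)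
          * (Mm a k * Mm b k + if a = b then ∑ l, Hr a k l * Hr a k l else 0))
        = (∑ a, ∑ b, (Q i a * Mm a k) * (Q j b * Mm b k))
          + ∑ a, (Q i a * Q j a) * (∑ l, Hr a k l * Hr a k l) := by
      intro k
      have e3a : ∀ a : Fin n, (∑ b, (Q i a * Q j b)
            * (Mm a k * Mm b k + if a = b then ∑ l, Hr a k l * Hr a k l else 0))
          = (∑ b, (Q i a * Mm a k) * (Q j b * Mm b k))
            + (Q i a * Q j a) * (∑ l, Hr a k l * Hr a k l) := by
        intro a
        have e4 : (∑ b, (Q i a * Q j b) * (if a = b then ∑ l, Hr a k l * Hr a k l else 0))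
            = (Q i a * Q j a) * (∑ l, Hr a k l * Hr a k l) := by
          rw [Finset.sum_eq_single a]
          · simp
          · intro b _ hb; simp [Ne.symm hb]
          · intro h; exact absurd (Finset.mem_univ a) h
        calc (∑ b, (Q i a * Q j b)
              * (Mm a k * Mm b k + if a = b then ∑ l, Hr a k l * Hr a k l else 0))
            = ∑ b, ((Q i a * Mm a k) * (Q j b * Mm b k)
              + (Q i a * Q j b) * (if a = b then ∑ l, Hr a k l * Hr a k l else 0)) :=
              Finset.sum_congr rfl fun b _ => by ring
          _ = (∑ b, (Q i a * Mm a k) * (Q j b * Mm b k))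
              + ∑ b, (Q i a * Q j b) * (if a = b then ∑ l, Hr a k l * Hr a k l else 0) :=
              Finset.sum_add_distrib
          _ = _ := by rw [e4]
      rw [Finset.sum_congr rfl fun a _ => e3a a, Finset.sum_add_distrib]
    rw [Finset.sum_congr rfl fun k _ => e3 k, Finset.sum_add_distrib]
    congr 1
    · rw [Matrix.mul_apply]
      apply Finset.sum_congr rfl; intro k _
      rw [Matrix.transpose_apply, Matrix.mul_apply, Matrix.mul_apply, Finset.sum_mul_sum]
    · rw [Finset.sum_comm]
      rw [Matrix.mul_apply]
      apply Finset.sum_congr rfl; intro a _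
      rw [Matrix.transpose_apply, Matrix.mul_diagonal, ← Finset.mul_sum,
        Finset.sum_congr rfl fun k (_ : k ∈ Finset.univ) => rfl]
      rw [hvsum a]
      ring
  -- Etau
  have hEtauval : Etau = (1/(n:ℝ)) * ∑ i, EYY i i := by
    rw [hEtau]
    have e5 : ∀ ω, tauOf (centerM (X ω))
        = (1/(n:ℝ)) * ∑ i, (centerM (X ω) * (centerM (X ω))ᵀ) i i := by
      intro ω
      rfl
    rw [integral_congr_ae (Filter.Eventually.of_forall e5), integral_const_mul,
      integral_finset_sum _ fun i _ => hYYint i i]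
    congr 1
    exact Finset.sum_congr rfl fun i _ => (hEYY i i).symm
  -- Elam
  have hElamval : Elam = -(1/((n:ℝ)-1)) * Etau := by
    have hn2' : 2 ≤ n := by omega
    have e6 : (fun ω => lamOf (centerM (X ω)))
        = fun ω => -(1/((n:ℝ)-1)) * tauOf (centerM (X ω)) :=
      funext fun ω => lam_eq_tau hn2' (X ω)
    rw [hElam, hEtau, e6, integral_const_mul]
  -- cardinalities and weights
  have hcards : (C1.card : ℝ) + ((C1ᶜ : Finset (Fin n)).card : ℝ) = (n:ℝ) := by
    have := Finset.card_add_card_compl C1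
    have h2 : (C1.card + (C1ᶜ : Finset (Fin n)).card : ℕ) = n := by
      simpa [Fintype.card_fin] using this
    exact_mod_cast h2
  have hn1 : (C1.card : ℝ) = (n:ℝ) * w1 := by rw [hw1]; field_simp
  have hn2 : ((C1ᶜ : Finset (Fin n)).card : ℝ) = (n:ℝ) * w2 := by
    rw [hw2, mul_div_assoc']; exact (mul_div_cancel_left₀ _ hNne).symm
  have hwsum : w1 + w2 = 1 := by
    have h' : (n:ℝ) * (w1 + w2) = (n:ℝ) * 1 := by
      rw [mul_add, mul_one, ← hn1, ← hn2]; exact hcards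
    exact mul_left_cancel₀ hNne h'
  have hw2eq : w2 = 1 - w1 := by linarith
  have hw1pos : 0 < w1 := by
    rw [hw1]
    have : 0 < (C1.card : ℝ) := by exact_mod_cast Finset.card_pos.mpr hC1
    exact div_pos this hNpos
  have hw2pos : 0 < w2 := by
    rw [hw2]
    have : 0 < ((C1ᶜ : Finset (Fin n)).card : ℝ) := by exact_mod_cast Finset.card_pos.mpr hC2
    exact div_pos this hNpos
  have hpg : (0:ℝ) ≤ (p:ℝ) * γ := by
    rw [hγ]; exact Finset.sum_nonneg fun k _ => sq_nonneg _
  -- Q*Mm entries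
  have hQM : ∀ i k, (Q * Mm) i k = (if i ∈ C1 then w2 else -w1) * (μ1 k - μ2 k) := by
    intro i k
    have : (Q * Mm) i k = Mm i k - (1/(n:ℝ)) * ∑ a, Mm a k := by
      rw [Matrix.mul_apply]
      simp only [hQd, Matrix.of_apply, sub_mul, Finset.sum_sub_distrib, ite_mul, one_mul,
        zero_mul, Finset.sum_ite_eq, Finset.mem_univ, if_true]
      rw [Finset.mul_sum]
    rw [this]
    have hs : (∑ a, Mm a k) = (C1.card : ℝ) * μ1 k + ((C1ᶜ : Finset (Fin n)).card : ℝ) * μ2 k := by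
      simp only [hMm, Matrix.of_apply]
      exact sum_mem_ite C1 (μ1 k) (μ2 k)
    rw [hs, hn1, hn2]
    by_cases h : i ∈ C1
    · simp only [hMm, Matrix.of_apply, h, if_true]
      rw [hw2eq]
      field_simp
      ring
    · simp only [hMm, Matrix.of_apply, h, if_false]
      rw [hw2eq]
      field_simp
      ring
  -- trace computations
  have hS1 : (∑ i, (Q * Mm * (Q * Mm)ᵀ) i i) = (n:ℝ) * (w1 * w2) * ((p:ℝ) * γ) := by
    have e6 : ∀ i, (Q * Mm * (Q * Mm)ᵀ) i i
        = (if i ∈ C1 then w2^2 else w1^2) * ((p:ℝ) * γ) := by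
      intro i
      rw [Matrix.mul_apply]
      have : ∀ k, (Q * Mm) i k * (Q * Mm)ᵀ k i
          = (if i ∈ C1 then w2^2 else w1^2) * (μ1 k - μ2 k)^2 := by
        intro k
        rw [Matrix.transpose_apply, hQM]
        by_cases h : i ∈ C1 <;> simp [h] <;> ring
      rw [Finset.sum_congr rfl fun k _ => this k, ← Finset.mul_sum, hγ]
    rw [Finset.sum_congr rfl fun i _ => e6 i]
    have := sum_mem_ite C1 (w2^2 * ((p:ℝ)*γ)) (w1^2 * ((p:ℝ)*γ))
    rw [show (∑ i, (if i ∈ C1 then w2^2 else w1^2) * ((p:ℝ)*γ))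
        = ∑ i : Fin n, (if i ∈ C1 then w2^2 * ((p:ℝ)*γ) else w1^2 * ((p:ℝ)*γ)) from
      Finset.sum_congr rfl fun i _ => by by_cases h : i ∈ C1 <;> simp [h]]
    rw [this, hn1, hn2]
    rw [hw2eq]; ring
  have hQsq : ∀ b : Fin n, (∑ i, (Q i b)^2) = 1 - 1/(n:ℝ) := by
    intro b
    have e7 : ∀ i : Fin n, (Q i b)^2 = (if i = b then 1 - 2/(n:ℝ) else 0) + 1/(n:ℝ)^2 := by
      intro i
      simp only [hQd, Matrix.of_apply]
      by_cases h : i = b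
      · simp only [h, if_true]; ring
      · simp only [h, if_false]; ring
    rw [Finset.sum_congr rfl fun i _ => e7 i, Finset.sum_add_distrib,
      Finset.sum_ite_eq' Finset.univ b fun _ => 1 - 2/(n:ℝ)]
    simp only [Finset.mem_univ, if_true, Finset.sum_const, Finset.card_univ, Fintype.card_fin,
      nsmul_eq_mul]
    field_simp
    ring
  have hS2 : (∑ i, (Q * D * Qᵀ) i i)
      = (1 - 1/(n:ℝ)) * ((C1.card : ℝ) * V1 + ((C1ᶜ : Finset (Fin n)).card : ℝ) * V2) := by
    have e8 : ∀ i, (Q * D * Qᵀ) i i = ∑ b, (Q i b)^2 * v b := by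
      intro i
      rw [Matrix.mul_apply]
      apply Finset.sum_congr rfl; intro b _
      rw [Matrix.transpose_apply, Matrix.mul_diagonal]
      ring
    rw [Finset.sum_congr rfl fun i _ => e8 i, Finset.sum_comm]
    have e9 : ∀ b, (∑ i, (Q i b)^2 * v b) = (1 - 1/(n:ℝ)) * v b := by
      intro b
      rw [← Finset.sum_mul, hQsq b]
    rw [Finset.sum_congr rfl fun b _ => e9 b, ← Finset.mul_sum]
    congr 1
    simp only [hvd]
    exact sum_mem_ite C1 V1 V2
  -- value of Etau
  have hEtau2 : Etau = w1 * w2 * ((p:ℝ)*γ)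
      + (1 - 1/(n:ℝ)) * (w1 * V1 + w2 * V2) := by
    rw [hEtauval, hEYYval]
    have : (∑ i, (Q * Mm * (Q * Mm)ᵀ + Q * D * Qᵀ) i i)
        = (∑ i, (Q * Mm * (Q * Mm)ᵀ) i i) + ∑ i, (Q * D * Qᵀ) i i := by
      rw [← Finset.sum_add_distrib]
      exact Finset.sum_congr rfl fun i _ => rfl
    rw [this, hS1, hS2, hn1, hn2]
    field_simp
  -- the key matrix identity
  set c : ℝ := -((n:ℝ)/((n:ℝ)-1)) * Etau with hcd
  have hQQ : Q * Q = Q := by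
    ext i j
    rw [Matrix.mul_apply]
    simp only [hQd, Matrix.of_apply]
    have e10 : ∀ a : Fin n, ((if i = a then (1:ℝ) else 0) - 1/(n:ℝ))
        * ((if a = j then (1:ℝ) else 0) - 1/(n:ℝ))
        = (if a = j then ((if i = a then (1:ℝ) else 0) - 1/(n:ℝ)) else 0)
          - (1/(n:ℝ)) * (if i = a then (1:ℝ) else 0) + 1/(n:ℝ)^2 := by
      intro a
      by_cases h1 : a = j
      · subst h1
        by_cases h2 : i = a <;> simp [h2] <;> ring
      · by_cases h2 : i = a <;> simp [h1, h2] <;> ring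
    rw [Finset.sum_congr rfl fun a _ => e10 a, Finset.sum_add_distrib, Finset.sum_sub_distrib,
      Finset.sum_ite_eq' Finset.univ j fun a => (if i = a then (1:ℝ) else 0) - 1/(n:ℝ),
      ← Finset.mul_sum, Finset.sum_ite_eq Finset.univ i fun _ => (1:ℝ)]
    simp only [Finset.mem_univ, if_true, Finset.sum_const, Finset.card_univ, Fintype.card_fin,
      nsmul_eq_mul]
    field_simp
    ring
  have hQT : Qᵀ = Q := by
    ext i j
    simp only [Matrix.transpose_apply, hQd, Matrix.of_apply, eq_comm]
  have hKey : EB - R = Q * ((D + c • (1 : Matrix (Fin n) (Fin n) ℝ)) * Q) := by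
    rw [hEB, hR, hEYYval, hEYval]
    have expand : Q * ((D + c • (1 : Matrix (Fin n) (Fin n) ℝ)) * Q)
        = Q * D * Qᵀ + c • Q := by
      rw [add_mul, mul_add, Matrix.smul_mul, Matrix.one_mul, Matrix.mul_smul, hQQ, hQT,
        Matrix.mul_assoc]
    rw [expand]
    ext i j
    simp only [Matrix.sub_apply, Matrix.add_apply, Matrix.smul_apply, smul_eq_mul]
    have hEn : En n i j = 1 := rfl
    have hone : (1 : Matrix (Fin n) (Fin n) ℝ) i j = if i = j then 1 else 0 :=
      Matrix.one_apply
    have hQij : Q i j = (if i = j then (1:ℝ) else 0) - 1/(n:ℝ) := rfl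
    rw [hEn, hone, hQij, hElamval, hcd]
    by_cases h : i = j
    · simp only [h, if_true]
      field_simp
      ring
    · simp only [h, if_false]
      field_simp
      ring
  -- diagonal form
  have hDiag : D + c • (1 : Matrix (Fin n) (Fin n) ℝ) = Matrix.diagonal (fun j => v j + c) := by
    ext i j
    by_cases h : i = j
    · simp [hDd, h, Matrix.diagonal, Matrix.one_apply]
    · simp [hDd, h, Matrix.diagonal, Matrix.one_apply]
  -- generic bound
  have hQop : opN Q ≤ 1 := opN_center_le (by omega)
  have hbound : ∀ Cb : ℝ, 0 ≤ Cb → (∀ j, |v j + c| ≤ Cb) → opN (EB - R) ≤ Cb := by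
    intro Cb hCb hj
    rw [hKey]
    calc opN (Q * ((D + c • (1 : Matrix (Fin n) (Fin n) ℝ)) * Q))
        ≤ opN Q * opN ((D + c • (1 : Matrix (Fin n) (Fin n) ℝ)) * Q) := opN_mul_le _ _
      _ ≤ opN Q * (opN (D + c • (1 : Matrix (Fin n) (Fin n) ℝ)) * opN Q) := by
          exact mul_le_mul_of_nonneg_left (opN_mul_le _ _) (norm_nonneg _)
      _ ≤ 1 * (Cb * 1) := by
          apply mul_le_mul hQop _ (mul_nonneg (norm_nonneg _) (norm_nonneg _)) zero_le_one
          apply mul_le_mul _ hQop (norm_nonneg _) hCb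
          rw [hDiag]
          exact opN_diagonal_le _ hCb hj
      _ = Cb := by ring
  -- entry bound pieces
  have hc2 : c = -(((n:ℝ)/((n:ℝ)-1)) * (w1 * w2) * ((p:ℝ)*γ)) - (w1 * V1 + w2 * V2) := by
    rw [hcd, hEtau2]
    field_simp
    ring
  have hvc : ∀ j, v j + c = (if j ∈ C1 then w2 * (V1 - V2) else -(w1 * (V1 - V2)))
      - ((n:ℝ)/((n:ℝ)-1)) * (w1 * w2) * ((p:ℝ)*γ) := by
    intro j
    rw [hc2]
    by_cases h : j ∈ C1
    · simp only [hvd, h, if_true]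
      rw [hw2eq]; ring
    · simp only [hvd, h, if_false]
      rw [hw2eq]; ring
  have he1 : (0:ℝ) ≤ ((n:ℝ)/((n:ℝ)-1)) * (w1 * w2) * ((p:ℝ)*γ) :=
    mul_nonneg (mul_nonneg (div_nonneg (by linarith) (by linarith))
      (le_of_lt (mul_pos hw1pos hw2pos))) hpg
  have he1le : ((n:ℝ)/((n:ℝ)-1)) * (w1 * w2) * ((p:ℝ)*γ) ≤ ((p:ℝ)*γ)/3 := by
    have hr : (n:ℝ)/((n:ℝ)-1) ≤ 4/3 := by
      rw [div_le_div_iff₀ hN1 (by norm_num)]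
      linarith
    have hww : w1 * w2 ≤ 1/4 := by
      calc w1 * w2 = 1/4 - (w1 - 1/2)^2 := by rw [hw2eq]; ring
        _ ≤ 1/4 := by linarith [sq_nonneg (w1 - 1/2)]
    have h0 : ((n:ℝ)/((n:ℝ)-1)) * (w1 * w2) ≤ (4/3) * (1/4) := by
      apply mul_le_mul hr hww (le_of_lt (mul_pos hw1pos hw2pos)) (by norm_num)
    calc ((n:ℝ)/((n:ℝ)-1)) * (w1 * w2) * ((p:ℝ)*γ) ≤ (4/3) * (1/4) * ((p:ℝ)*γ) :=
          mul_le_mul_of_nonneg_right h0 hpg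
      _ = ((p:ℝ)*γ)/3 := by ring
  have habs : ∀ j, |v j + c| ≤ |V1 - V2| + ((p:ℝ)*γ)/3 := by
    intro j
    rw [hvc j]
    have h1 : |(if j ∈ C1 then w2 * (V1 - V2) else -(w1 * (V1 - V2)))| ≤ |V1 - V2| := by
      by_cases h : j ∈ C1
      · simp only [h, if_true, abs_mul]
        calc |w2| * |V1 - V2| ≤ 1 * |V1 - V2| := by
              apply mul_le_mul_of_nonneg_right _ (abs_nonneg _)
              rw [abs_of_pos hw2pos]; linarith
          _ = |V1 - V2| := one_mul _
      · simp only [h, if_false, abs_neg, abs_mul]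
        calc |w1| * |V1 - V2| ≤ 1 * |V1 - V2| := by
              apply mul_le_mul_of_nonneg_right _ (abs_nonneg _)
              rw [abs_of_pos hw1pos]; linarith
          _ = |V1 - V2| := one_mul _
    calc |(if j ∈ C1 then w2 * (V1 - V2) else -(w1 * (V1 - V2)))
          - ((n:ℝ)/((n:ℝ)-1)) * (w1 * w2) * ((p:ℝ)*γ)|
        ≤ |(if j ∈ C1 then w2 * (V1 - V2) else -(w1 * (V1 - V2)))|
          + |((n:ℝ)/((n:ℝ)-1)) * (w1 * w2) * ((p:ℝ)*γ)| := abs_sub _ _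
      _ ≤ |V1 - V2| + ((p:ℝ)*γ)/3 := by
          apply add_le_add h1
          rw [abs_of_nonneg he1]
          exact he1le
  have hξn : (2:ℝ) ≤ ξ * (n:ℝ) := by
    have h4 : (1 / (2 * (n : ℝ))) * 4 ≤ ξ := by
      calc (1 / (2 * (n : ℝ))) * 4 ≤ (1 / (2 * (n : ℝ))) * max 4 (1 / wmin) := by
            apply mul_le_mul_of_nonneg_left (le_max_left _ _) (by positivity)
        _ ≤ ξ := hξlow
    have : 2 / (n:ℝ) ≤ ξ := by
      calc 2 / (n:ℝ) = (1 / (2 * (n : ℝ))) * 4 := by field_simp; ring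
        _ ≤ ξ := h4
    calc (2:ℝ) = (2 / (n:ℝ)) * (n:ℝ) := by field_simp
      _ ≤ ξ * (n:ℝ) := mul_le_mul_of_nonneg_right this (le_of_lt hNpos)
  constructor
  · apply hbound
    · have h0 : (0:ℝ) ≤ ξ * (n:ℝ) := by linarith
      linarith [mul_nonneg h0 hpg]
    · intro j
      calc |v j + c| ≤ |V1 - V2| + ((p:ℝ)*γ)/3 := habs j
        _ ≤ ξ * (n:ℝ) * ((p:ℝ)*γ) / 3 + ((p:ℝ)*γ)/3 := by linarith [hA2]
        _ ≤ (2/3) * ξ * (n:ℝ) * ((p:ℝ)*γ) := by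
            have h9 : 0 ≤ (ξ*(n:ℝ) - 1) * ((p:ℝ)*γ) := mul_nonneg (by linarith) hpg
            linarith [h9]
  · intro hVeq
    apply hbound
    · linarith [hpg]
    · intro j
      rw [hvc j, hVeq]
      have hz : (if j ∈ C1 then w2 * (V2 - V2) else -(w1 * (V2 - V2))) = 0 := by
        by_cases h : j ∈ C1 <;> simp [h]
      rw [hz, zero_sub, abs_neg, abs_of_nonneg he1]
      exact he1le
end
end

section
/- Deterministic bound: for every Ẑ ∈ M_opt and Z* = u₂u₂ᵀ, with P₂ = Z*/n, ŵ_j = ‖(Ẑ−Z*)_{·j}‖₁/(2n), and L_j = ⟨μ^{(1)}−μ^{(2)}, Z_j⟩: |⟨P₂(𝔼(Y)(Y−𝔼(Y))ᵀ), Ẑ−Z*⟩| ≤ 4w₁w₂ n Σ_{j=1}^n |L_j| ŵ_j + 4w₁w₂ |Σ_{i=1}^n L_i| · ‖Ẑ−Z*‖₁/(2n). -/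
open MeasureTheory ProbabilityTheory Matrix Finset
open scoped BigOperators ENNReal

noncomputable section

/-- deterministic bound on `⟨P₂(𝔼(Y)(Y−𝔼Y)ᵀ), Ẑ−Z*⟩`. -/
theorem stmt_14 (n p : ℕ) (hn : 0 < n)
    (C1 : Finset (Fin n))
    (μ1 μ2 : Fin p → ℝ)
    (w1 w2 : ℝ)
    (hw1 : w1 = (C1.card : ℝ) / n)
    (hw2 : w2 = ((C1ᶜ : Finset (Fin n)).card : ℝ) / n)
    -- an arbitrary realization of the noise matrix
    (Z : Fin n → Fin p → ℝ)
    -- 𝔼Y has rows w₂(μ¹−μ²) on C₁ and w₁(μ²−μ¹) on C₂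
    (EYm : Matrix (Fin n) (Fin p) ℝ)
    (hEY : ∀ j k, EYm j k =
      if j ∈ C1 then w2 * (μ1 k - μ2 k) else w1 * (μ2 k - μ1 k))
    -- Y − 𝔼Y = (I − P₁)Z
    (Ydev : Matrix (Fin n) (Fin p) ℝ)
    (hYdev : ∀ j k, Ydev j k = Z j k - (1 / (n : ℝ)) * ∑ l, Z l k)
    (P2 : Matrix (Fin n) (Fin n) ℝ) (hP2 : P2 = (1 / (n : ℝ)) • Zstar C1)
    (L : Fin n → ℝ) (hL : ∀ j, L j = ∑ k, (μ1 k - μ2 k) * Z j k) :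
    ∀ Zh ∈ Mopt n, ∀ w : Fin n → ℝ,
      (∀ j, w j = (∑ i, |(Zh - Zstar C1) i j|) / (2 * (n : ℝ))) →
      |mip (P2 * (EYm * Ydevᵀ)) (Zh - Zstar C1)| ≤
        4 * w1 * w2 * n * (∑ j, |L j| * w j) +
          4 * w1 * w2 * |∑ i, L i| * (l1 (Zh - Zstar C1) / (2 * (n : ℝ))) := by
  intro Zh _hZh w hw
  have hn' : (n : ℝ) ≠ 0 := Nat.cast_ne_zero.mpr hn.ne'
  have hnpos : (0 : ℝ) < n := Nat.cast_pos.mpr hn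
  set D : Matrix (Fin n) (Fin n) ℝ := Zh - Zstar C1 with hD
  set c : Fin p → ℝ := fun k => μ1 k - μ2 k with hc
  set S : ℝ := ∑ i, L i with hS
  have hw1nn : 0 ≤ w1 := by rw [hw1]; positivity
  have hw2nn : 0 ≤ w2 := by rw [hw2]; positivity
  -- the inner products of rows of Ydev with c
  have hG : ∀ j, (∑ k, c k * Ydev j k) = L j - S / (n : ℝ) := by
    intro j
    have h1 : ∀ k, c k * Ydev j k
        = c k * Z j k - (1 / (n : ℝ)) * (c k * ∑ l, Z l k) := by
      intro k; rw [hYdev]; ring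
    rw [Finset.sum_congr rfl fun k _ => h1 k, Finset.sum_sub_distrib, ← Finset.mul_sum]
    have h2 : (∑ k, c k * ∑ l, Z l k) = S := by
      calc (∑ k, c k * ∑ l, Z l k) = ∑ k, ∑ l, c k * Z l k := by
            simp [Finset.mul_sum]
        _ = ∑ l, ∑ k, c k * Z l k := Finset.sum_comm
        _ = S := by simp [hS, hL, hc]
    rw [h2, hL]
    ring
  have hu2 : ∀ a, u2v C1 a * u2v C1 a = 1 := by
    intro a; unfold u2v; split <;> norm_num
  have huabs : ∀ a, |u2v C1 a| = 1 := by
    intro a; unfold u2v; split <;> norm_num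
  -- sum of weights
  have hcard : (C1.card : ℝ) = n * w1 := by rw [hw1]; field_simp
  have hcardc : ((C1ᶜ : Finset (Fin n)).card : ℝ) = n * w2 := by rw [hw2]; generalize ((C1ᶜ : Finset (Fin n)).card : ℝ) = x; field_simp
  have hsumite : (∑ a : Fin n, (if a ∈ C1 then w2 else w1)) = 2 * (n : ℝ) * w1 * w2 := by
    rw [Finset.sum_ite, Finset.sum_const, Finset.sum_const]
    have e1 : Finset.univ.filter (fun a => a ∈ C1) = C1 := by
      ext a; simp
    have e2 : Finset.univ.filter (fun a => ¬ a ∈ C1) = C1ᶜ := by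
      ext a; simp
    rw [e1, e2]
    simp only [nsmul_eq_mul]
    rw [hcard, hcardc]
    ring
  -- entrywise formula for the matrix
  have hEYm : ∀ a k, EYm a k = u2v C1 a * (if a ∈ C1 then w2 else w1) * c k := by
    intro a k
    rw [hEY]
    unfold u2v
    by_cases h : a ∈ C1 <;> simp [h, hc] <;> ring
  have hA : ∀ i j, (P2 * (EYm * Ydevᵀ)) i j
      = 2 * w1 * w2 * u2v C1 i * (L j - S / (n : ℝ)) := by
    intro i j
    rw [Matrix.mul_apply]
    have h1 : ∀ a, P2 i a * (EYm * Ydevᵀ) a j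
        = (1 / (n : ℝ)) * u2v C1 i * (if a ∈ C1 then w2 else w1) * (L j - S / (n : ℝ)) := by
      intro a
      rw [Matrix.mul_apply]
      have h2 : (∑ k, EYm a k * Ydevᵀ k j)
          = u2v C1 a * (if a ∈ C1 then w2 else w1) * (L j - S / (n : ℝ)) := by
        rw [← hG j, Finset.mul_sum]
        refine Finset.sum_congr rfl fun k _ => ?_
        rw [hEYm, Matrix.transpose_apply]
        ring
      rw [h2, hP2]
      simp only [Matrix.smul_apply, Zstar, Matrix.of_apply, smul_eq_mul]
      linear_combination (1 / (n : ℝ) * u2v C1 i * (if a ∈ C1 then w2 else w1)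
        * (L j - S / (n : ℝ))) * hu2 a
    rw [Finset.sum_congr rfl fun a _ => h1 a]
    have : (∑ a : Fin n, (1 / (n : ℝ)) * u2v C1 i * (if a ∈ C1 then w2 else w1)
        * (L j - S / (n : ℝ)))
        = (1 / (n : ℝ)) * u2v C1 i * (L j - S / (n : ℝ))
          * (∑ a : Fin n, (if a ∈ C1 then w2 else w1)) := by
      rw [Finset.mul_sum]
      exact Finset.sum_congr rfl fun a _ => by ring
    rw [this, hsumite]
    field_simp
  -- mip identity
  have hmip : mip (P2 * (EYm * Ydevᵀ)) D
      = 2 * w1 * w2 * ∑ j, (L j - S / (n : ℝ)) * (∑ i, u2v C1 i * D i j) := by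
    unfold mip Matrix.trace
    simp only [Matrix.diag_apply]
    simp only [Finset.mul_sum]
    refine Finset.sum_congr rfl fun j _ => ?_
    rw [Matrix.mul_apply]
    refine Finset.sum_congr rfl fun i _ => ?_
    rw [Matrix.transpose_apply, hA]
    ring
  -- column sums of |D|
  have hDj : ∀ j, (∑ i, |D i j|) = 2 * (n : ℝ) * w j := by
    intro j
    rw [hw j]
    field_simp
  have hwnn : ∀ j, 0 ≤ w j := by
    intro j
    rw [hw j]
    positivity
  -- sum of w equals l1 / (2n)
  have hsumw : (∑ j, w j) = l1 D / (2 * (n : ℝ)) := by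
    unfold l1
    rw [Finset.sum_comm, Finset.sum_div]
    exact Finset.sum_congr rfl fun j _ => hw j
  -- pointwise bound
  have hbound : ∀ j, |(L j - S / (n : ℝ)) * (∑ i, u2v C1 i * D i j)|
      ≤ (|L j| + |S| / (n : ℝ)) * (2 * (n : ℝ) * w j) := by
    intro j
    rw [abs_mul]
    have h1 : |L j - S / (n : ℝ)| ≤ |L j| + |S| / (n : ℝ) := by
      have := abs_sub (L j) (S / (n : ℝ))
      rw [abs_div, abs_of_pos hnpos] at this
      exact this
    have h2 : |∑ i, u2v C1 i * D i j| ≤ ∑ i, |D i j| := by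
      refine (Finset.abs_sum_le_sum_abs _ _).trans ?_
      refine Finset.sum_le_sum fun i _ => ?_
      rw [abs_mul, huabs, one_mul]
    rw [← hDj j]
    exact mul_le_mul h1 h2 (abs_nonneg _) (by positivity)
  -- final estimate
  rw [hmip, ← hsumw]
  calc |2 * w1 * w2 * ∑ j, (L j - S / (n : ℝ)) * (∑ i, u2v C1 i * D i j)|
      = 2 * w1 * w2 * |∑ j, (L j - S / (n : ℝ)) * (∑ i, u2v C1 i * D i j)| := by
        rw [abs_mul]
        congr 1
        rw [abs_of_nonneg (by positivity)]
    _ ≤ 2 * w1 * w2 * ∑ j, (|L j| + |S| / (n : ℝ)) * (2 * (n : ℝ) * w j) := by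
        refine mul_le_mul_of_nonneg_left ?_ (by positivity)
        exact (Finset.abs_sum_le_sum_abs _ _).trans (Finset.sum_le_sum fun j _ => hbound j)
    _ = 4 * w1 * w2 * n * (∑ j, |L j| * w j) + 4 * w1 * w2 * |S| * (∑ j, w j) := by
        rw [Finset.mul_sum, Finset.mul_sum, Finset.mul_sum, ← Finset.sum_add_distrib]
        refine Finset.sum_congr rfl fun j _ => ?_
        field_simp
        ring
end
end

section
/- Deterministic bounds: let Ψ = ZZᵀ − 𝔼(ZZᵀ), P₁ = (1/n)𝟙ₙ𝟙ₙᵀ, P₂ = u₂u₂ᵀ/n, Z* = u₂u₂ᵀ. For every symmetric Ẑ ∈ M_opt: (i) |⟨P₂ΨP₁, Ẑ−Z*⟩| ≤ ‖Ψ‖₂‖Ẑ−Z*‖₁/n; (ii) |⟨P₂P₁ΨP₁, Ẑ−Z*⟩| ≤ |w₁−w₂|‖Ψ‖₂‖Ẑ−Z*‖₁/n; (iii) |⟨P₂P₁ΨP₁P₂, Ẑ−Z*⟩| ≤ |w₁−w₂|²‖Ψ‖₂‖Ẑ−Z*‖₁/n; (iv) ⟨P₂ΨP₂, Ẑ−Z*⟩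 ≤ ‖Ψ‖₂‖Ẑ−Z*‖₁/n; (v) |⟨P₂ΨP₁P₂, Ẑ−Z*⟩| = |⟨P₂P₁ΨP₂, Ẑ−Z*⟩| ≤ |w₁−w₂|‖Ψ‖₂‖Ẑ−Z*‖₁/n. When w₁ = w₂, the right-hand sides of (ii), (iii), (v) vanish since P₂P₁ = 0. -/
open MeasureTheory ProbabilityTheory Matrix Finset
open scoped BigOperators ENNReal

noncomputable section

namespace Stmt17Aux

open Matrix Finset

lemma mip_eq_sum {n : ℕ} (A B : Matrix (Fin n) (Fin n) ℝ) :
    mip A B = ∑ i, ∑ j, A i j * B i j := by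
  simp only [mip, Matrix.trace, Matrix.diag, Matrix.mul_apply, Matrix.transpose_apply]
  exact Finset.sum_comm

lemma l1_nonneg {n : ℕ} (M : Matrix (Fin n) (Fin n) ℝ) : 0 ≤ l1 M :=
  Finset.sum_nonneg fun i _ => Finset.sum_nonneg fun j _ => abs_nonneg _

lemma mip_abs_le {n : ℕ} (M D : Matrix (Fin n) (Fin n) ℝ) (K : ℝ) (hK : 0 ≤ K)
    (h : ∀ i j, |M i j| ≤ K) : |mip M D| ≤ K * l1 D := by
  rw [mip_eq_sum, l1, Finset.mul_sum]
  refine (Finset.abs_sum_le_sum_abs _ _).trans (Finset.sum_le_sum fun i _ => ?_)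
  rw [Finset.mul_sum]
  refine (Finset.abs_sum_le_sum_abs _ _).trans (Finset.sum_le_sum fun j _ => ?_)
  rw [abs_mul]
  exact mul_le_mul_of_nonneg_right (h i j) (abs_nonneg _)

lemma opN_nonneg {n p : ℕ} (M : Matrix (Fin n) (Fin p) ℝ) : 0 ≤ opN M := norm_nonneg _

lemma norm_symm_le {n : ℕ} (v : Fin n → ℝ) (hv : ∀ i, |v i| ≤ 1) :
    ‖(WithLp.equiv 2 (Fin n → ℝ)).symm v‖ ≤ Real.sqrt n := by
  rw [EuclideanSpace.norm_eq]
  refine Real.sqrt_le_sqrt ?_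
  calc ∑ i, ‖(WithLp.equiv 2 (Fin n → ℝ)).symm v i‖ ^ 2
      ≤ ∑ i : Fin n, (1 : ℝ) := by
        refine Finset.sum_le_sum fun i _ => ?_
        rw [show ((WithLp.equiv 2 (Fin n → ℝ)).symm v).ofLp i = v i from rfl, Real.norm_eq_abs, ← one_pow 2]
        exact pow_le_pow_left₀ (abs_nonneg _) (hv i) 2
    _ = n := by simp

lemma inner_eq_dot {n : ℕ} (v w : Fin n → ℝ) :
    (inner ℝ ((WithLp.equiv 2 (Fin n → ℝ)).symm v) ((WithLp.equiv 2 (Fin n → ℝ)).symm w) : ℝ)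
      = v ⬝ᵥ w := by
  simp [PiLp.inner_apply, RCLike.inner_apply, dotProduct, WithLp.equiv_symm_apply, PiLp.toLp_apply, mul_comm]

lemma dot_mulVec_le {n : ℕ} (A : Matrix (Fin n) (Fin n) ℝ) (a b : Fin n → ℝ)
    (ha : ∀ i, |a i| ≤ 1) (hb : ∀ i, |b i| ≤ 1) :
    |a ⬝ᵥ A *ᵥ b| ≤ opN A * n := by
  set a' : EuclideanSpace ℝ (Fin n) := (WithLp.equiv 2 (Fin n → ℝ)).symm a with ha'
  set b' : EuclideanSpace ℝ (Fin n) := (WithLp.equiv 2 (Fin n → ℝ)).symm b with hb'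
  have h1 : a ⬝ᵥ A *ᵥ b = (inner ℝ a' (LinearMap.toContinuousLinearMap (Matrix.toEuclideanLin A) b') : ℝ) := by
    rw [ha', hb']
    rw [show (LinearMap.toContinuousLinearMap (Matrix.toEuclideanLin A))
        ((WithLp.equiv 2 (Fin n → ℝ)).symm b) = Matrix.toEuclideanLin A ((WithLp.equiv 2 (Fin n → ℝ)).symm b) from rfl]
    rw [show Matrix.toEuclideanLin A ((WithLp.equiv 2 (Fin n → ℝ)).symm b) = (WithLp.equiv 2 (Fin n → ℝ)).symm (A *ᵥ b) from rfl, inner_eq_dot]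
  rw [h1]
  calc |(inner ℝ a' (LinearMap.toContinuousLinearMap (Matrix.toEuclideanLin A) b') : ℝ)|
      ≤ ‖a'‖ * ‖LinearMap.toContinuousLinearMap (Matrix.toEuclideanLin A) b'‖ :=
        abs_real_inner_le_norm _ _
    _ ≤ ‖a'‖ * (opN A * ‖b'‖) := by
        exact mul_le_mul_of_nonneg_left (ContinuousLinearMap.le_opNorm _ _) (norm_nonneg _)
    _ ≤ Real.sqrt n * (opN A * Real.sqrt n) := by
        refine mul_le_mul (norm_symm_le a ha) ?_
          (mul_nonneg (opN_nonneg _) (norm_nonneg _)) (Real.sqrt_nonneg _)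
        exact mul_le_mul_of_nonneg_left (norm_symm_le b hb) (opN_nonneg _)
    _ = opN A * (Real.sqrt n * Real.sqrt n) := by ring
    _ = opN A * n := by rw [Real.mul_self_sqrt (Nat.cast_nonneg n)]

lemma sand_apply {n : ℕ} (A : Matrix (Fin n) (Fin n) ℝ) (x a b y : Fin n → ℝ) (i j : Fin n) :
    (Matrix.vecMulVec x a * A * Matrix.vecMulVec b y) i j = x i * (a ⬝ᵥ A *ᵥ b) * y j := by
  simp only [Matrix.mul_apply, Matrix.vecMulVec_apply, dotProduct, Matrix.mulVec,
    Finset.sum_mul, Finset.mul_sum]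
  rw [Finset.sum_comm]
  exact Finset.sum_congr rfl fun k _ => Finset.sum_congr rfl fun l _ => by ring

lemma vmv_mul_vmv {n : ℕ} (x a b y : Fin n → ℝ) :
    Matrix.vecMulVec x a * Matrix.vecMulVec b y = (a ⬝ᵥ b) • Matrix.vecMulVec x y := by
  ext i j
  simp only [Matrix.mul_apply, Matrix.vecMulVec_apply, Matrix.smul_apply, dotProduct,
    smul_eq_mul, Finset.sum_mul]
  exact Finset.sum_congr rfl fun k _ => by ring

lemma smul_sand {n : ℕ} (s t : ℝ) (X A Y : Matrix (Fin n) (Fin n) ℝ) :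
    (s • X) * A * (t • Y) = (s * t) • (X * A * Y) := by
  rw [Matrix.smul_mul, Matrix.mul_smul, Matrix.smul_mul, smul_smul, mul_comm]

lemma key {n : ℕ} (hn : 0 < n) (A D : Matrix (Fin n) (Fin n) ℝ) (c : ℝ) (x a b y : Fin n → ℝ)
    (hx : ∀ i, |x i| ≤ 1) (ha : ∀ i, |a i| ≤ 1) (hb : ∀ i, |b i| ≤ 1) (hy : ∀ i, |y i| ≤ 1) :
    |mip ((c / (n : ℝ) ^ 2) • (Matrix.vecMulVec x a * A * Matrix.vecMulVec b y)) D|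
      ≤ |c| * opN A * l1 D / n := by
  have hn' : (0 : ℝ) < n := Nat.cast_pos.mpr hn
  have hK : (0 : ℝ) ≤ |c| * opN A / n := by
    apply div_nonneg (mul_nonneg (abs_nonneg _) (opN_nonneg _)) hn'.le
  have hb1 : |mip ((c / (n : ℝ) ^ 2) • (Matrix.vecMulVec x a * A * Matrix.vecMulVec b y)) D|
      ≤ (|c| * opN A / n) * l1 D := by
    refine mip_abs_le _ _ _ hK fun i j => ?_
    rw [Matrix.smul_apply, sand_apply, smul_eq_mul, abs_mul, abs_mul, abs_mul, abs_div]
    have h2 : |(n : ℝ) ^ 2| = (n : ℝ) ^ 2 := abs_of_pos (by positivity)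
    rw [h2]
    have h1 : |x i| * |a ⬝ᵥ A *ᵥ b| * |y j| ≤ 1 * (opN A * n) * 1 := by
      refine mul_le_mul ?_ (hy j) (abs_nonneg _)
        (mul_nonneg zero_le_one (mul_nonneg (opN_nonneg _) (Nat.cast_nonneg n)))
      exact mul_le_mul (hx i) (dot_mulVec_le A a b ha hb) (abs_nonneg _) zero_le_one
    calc |c| / (n : ℝ) ^ 2 * (|x i| * |a ⬝ᵥ A *ᵥ b| * |y j|)
        ≤ |c| / (n : ℝ) ^ 2 * (1 * (opN A * n) * 1) := by
          exact mul_le_mul_of_nonneg_left h1 (by positivity)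
      _ = |c| * opN A / n := by field_simp
  calc |mip ((c / (n : ℝ) ^ 2) • (Matrix.vecMulVec x a * A * Matrix.vecMulVec b y)) D|
      ≤ (|c| * opN A / n) * l1 D := hb1
    _ = |c| * opN A * l1 D / n := by ring

lemma dot_symm {n : ℕ} (A : Matrix (Fin n) (Fin n) ℝ) (hA : Aᵀ = A) (a b : Fin n → ℝ) :
    a ⬝ᵥ A *ᵥ b = b ⬝ᵥ A *ᵥ a := by
  rw [Matrix.dotProduct_mulVec, ← Matrix.mulVec_transpose, hA, dotProduct_comm]

end Stmt17Aux


/-- deterministic projection bounds for `Ψ = ZZᵀ − 𝔼(ZZᵀ)`. -/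
theorem stmt_17 (n p : ℕ) (hn : 0 < n)
    (Ω : Type) [MeasurableSpace Ω] (P : Measure Ω) [IsProbabilityMeasure P]
    (C1 : Finset (Fin n))
    (w1 w2 : ℝ)
    (hw1 : w1 = (C1.card : ℝ) / n)
    (hw2 : w2 = ((C1ᶜ : Finset (Fin n)).card : ℝ) / n)
    (Zn : Ω → Matrix (Fin n) (Fin p) ℝ)
    (hZmeas : ∀ i k, Measurable fun ω => Zn ω i k)
    (EZZ : Matrix (Fin n) (Fin n) ℝ)
    (hEZZ : ∀ i j, EZZ i j = ∫ ω, (Zn ω * (Zn ω)ᵀ) i j ∂P)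
    (Ψ : Ω → Matrix (Fin n) (Fin n) ℝ)
    (hΨ : ∀ ω, Ψ ω = Zn ω * (Zn ω)ᵀ - EZZ)
    (P1 : Matrix (Fin n) (Fin n) ℝ) (hP1 : P1 = (1 / (n : ℝ)) • En n)
    (P2 : Matrix (Fin n) (Fin n) ℝ) (hP2 : P2 = (1 / (n : ℝ)) • Zstar C1) :
    (∀ ω : Ω, ∀ Zh ∈ Mopt n,
      -- (i)
      |mip (P2 * Ψ ω * P1) (Zh - Zstar C1)| ≤
          opN (Ψ ω) * l1 (Zh - Zstar C1) / n ∧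
      -- (ii)
      |mip (P2 * P1 * Ψ ω * P1) (Zh - Zstar C1)| ≤
          |w1 - w2| * opN (Ψ ω) * l1 (Zh - Zstar C1) / n ∧
      -- (iii)
      |mip (P2 * P1 * Ψ ω * P1 * P2) (Zh - Zstar C1)| ≤
          |w1 - w2| ^ 2 * opN (Ψ ω) * l1 (Zh - Zstar C1) / n ∧
      -- (iv)
      mip (P2 * Ψ ω * P2) (Zh - Zstar C1) ≤
          opN (Ψ ω) * l1 (Zh - Zstar C1) / n ∧
      -- (v)
      |mip (P2 * Ψ ω * P1 * P2) (Zh - Zstar C1)|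
          = |mip (P2 * P1 * Ψ ω * P2) (Zh - Zstar C1)| ∧
      |mip (P2 * P1 * Ψ ω * P2) (Zh - Zstar C1)| ≤
          |w1 - w2| * opN (Ψ ω) * l1 (Zh - Zstar C1) / n) ∧
    (w1 = w2 → P2 * P1 = 0) := by
  classical
  set u : Fin n → ℝ := u2v C1 with hu_def
  set e : Fin n → ℝ := fun _ => (1 : ℝ) with he_def
  have hn' : ((n : ℝ)) ≠ 0 := Nat.cast_ne_zero.mpr hn.ne'
  have hu : ∀ i, |u i| ≤ 1 := by
    intro i; simp only [hu_def, u2v]; split <;> norm_num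
  have he : ∀ i, |e i| ≤ 1 := by intro i; simp [he_def]
  have hZs : Zstar C1 = Matrix.vecMulVec u u := by ext i j; rfl
  have hEn : En n = Matrix.vecMulVec e e := by
    ext i j; simp [En, Matrix.vecMulVec_apply, he_def]
  have hP2' : P2 = (1 / (n : ℝ)) • Matrix.vecMulVec u u := by rw [hP2, hZs]
  have hP1' : P1 = (1 / (n : ℝ)) • Matrix.vecMulVec e e := by rw [hP1, hEn]
  have hue : u ⬝ᵥ e = (C1.card : ℝ) - ((C1ᶜ : Finset (Fin n)).card : ℝ) := by
    simp only [dotProduct, hu_def, he_def, u2v, mul_one]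
    rw [Finset.sum_ite, Finset.sum_const, Finset.sum_const]
    have h1 : Finset.univ.filter (fun x => x ∈ C1) = C1 := by ext x; simp
    have h2 : Finset.univ.filter (fun x => ¬ x ∈ C1) = C1ᶜ := by ext x; simp
    rw [h1, h2]
    simp
    ring
  have hc : u ⬝ᵥ e = (n : ℝ) * (w1 - w2) := by
    rw [hue, hw1, hw2]; field_simp
  have hP2P1 : P2 * P1 = ((w1 - w2) / (n : ℝ)) • Matrix.vecMulVec u e := by
    rw [hP2', hP1', Matrix.smul_mul, Matrix.mul_smul, smul_smul,
      Stmt17Aux.vmv_mul_vmv, hc, smul_smul]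
    congr 1; field_simp
  have hP1P2 : P1 * P2 = ((w1 - w2) / (n : ℝ)) • Matrix.vecMulVec e u := by
    rw [hP1', hP2', Matrix.smul_mul, Matrix.mul_smul, smul_smul,
      Stmt17Aux.vmv_mul_vmv, dotProduct_comm, hc, smul_smul]
    congr 1; field_simp
  have hΨsym : ∀ ω, (Ψ ω)ᵀ = Ψ ω := by
    intro ω
    have hZZ : ∀ ω' : Ω, (Zn ω' * (Zn ω')ᵀ)ᵀ = Zn ω' * (Zn ω')ᵀ := fun ω' => by
      rw [Matrix.transpose_mul, Matrix.transpose_transpose]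
    have hE : EZZᵀ = EZZ := by
      ext i j
      rw [Matrix.transpose_apply, hEZZ, hEZZ]
      congr 1
      funext ω'
      conv_lhs => rw [← hZZ ω']
      rfl
    rw [hΨ, Matrix.transpose_sub, hZZ, hE]
  refine ⟨fun ω Zh _ => ?_, fun hw => by rw [hP2P1, hw, sub_self]; simp⟩
  have hM1 : P2 * Ψ ω * P1
      = ((1 : ℝ) / (n : ℝ) ^ 2) • (Matrix.vecMulVec u u * Ψ ω * Matrix.vecMulVec e e) := by
    rw [hP2', hP1', Stmt17Aux.smul_sand]; congr 1; ring
  have hM2 : P2 * P1 * Ψ ω * P1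
      = ((w1 - w2) / (n : ℝ) ^ 2) • (Matrix.vecMulVec u e * Ψ ω * Matrix.vecMulVec e e) := by
    rw [hP2P1, hP1', Stmt17Aux.smul_sand]; congr 1; ring
  have hM3 : P2 * P1 * Ψ ω * P1 * P2
      = ((w1 - w2) ^ 2 / (n : ℝ) ^ 2) • (Matrix.vecMulVec u e * Ψ ω * Matrix.vecMulVec e u) := by
    rw [mul_assoc (P2 * P1 * Ψ ω) P1 P2, hP2P1, hP1P2, Stmt17Aux.smul_sand]; congr 1; ring
  have hM4 : P2 * Ψ ω * P2
      = ((1 : ℝ) / (n : ℝ) ^ 2) • (Matrix.vecMulVec u u * Ψ ω * Matrix.vecMulVec u u) := by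
    rw [hP2', Stmt17Aux.smul_sand]; congr 1; ring
  have hM5b : P2 * P1 * Ψ ω * P2
      = ((w1 - w2) / (n : ℝ) ^ 2) • (Matrix.vecMulVec u e * Ψ ω * Matrix.vecMulVec u u) := by
    rw [hP2P1, hP2', Stmt17Aux.smul_sand]; congr 1; ring
  have hM5a : P2 * Ψ ω * P1 * P2
      = ((w1 - w2) / (n : ℝ) ^ 2) • (Matrix.vecMulVec u u * Ψ ω * Matrix.vecMulVec e u) := by
    rw [mul_assoc (P2 * Ψ ω) P1 P2, hP1P2, hP2', Stmt17Aux.smul_sand]; congr 1; ring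
  have hM5eq : P2 * Ψ ω * P1 * P2 = P2 * P1 * Ψ ω * P2 := by
    rw [hM5a, hM5b]
    ext i j
    simp only [Matrix.smul_apply, Stmt17Aux.sand_apply, smul_eq_mul]
    rw [Stmt17Aux.dot_symm (Ψ ω) (hΨsym ω) u e]
  refine ⟨?_, ?_, ?_, ?_, ?_, ?_⟩
  · rw [hM1]
    simpa using Stmt17Aux.key hn (Ψ ω) (Zh - Zstar C1) 1 u u e e hu hu he he
  · rw [hM2]
    exact Stmt17Aux.key hn (Ψ ω) (Zh - Zstar C1) (w1 - w2) u e e e hu he he he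
  · rw [hM3]
    have h := Stmt17Aux.key hn (Ψ ω) (Zh - Zstar C1) ((w1 - w2) ^ 2) u e e u hu he he hu
    rwa [abs_pow] at h
  · refine (le_abs_self _).trans ?_
    rw [hM4]
    simpa using Stmt17Aux.key hn (Ψ ω) (Zh - Zstar C1) 1 u u u u hu hu hu hu
  · rw [hM5eq]
  · rw [hM5b]
    exact Stmt17Aux.key hn (Ψ ω) (Zh - Zstar C1) (w1 - w2) u e u u hu he hu hu
end
end
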